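/- Let N_p0 be an integer with N_p0 ≡ K (mod 2) and K ≤ N_p0 ≤ K·3^{m-1}, and let p ∈ Ω(N_p0, K). Then the transition vector t = (t_0, …, t_{m-2}) of p, defined by t_0 = K − p_0 and t_i = 3·t_{i−1} − p_i for 1 ≤ i ≤ m−2, satisfies 0 ≤ t_i ≤ K·3^i for every i and Σ_{i=0}^{m-2} t_i = (N_p0 − K)/2. -/
import Mathlib


/-- A pilot assignment vector `p = (p_0, …, p_{m-1})` for `K` users per cell is
valid if `0 ≤ p_i ≤ K·3^i` for every `i` and `Σ_i p_i · 3^{-i} = K`. -/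
def validPK {m : ℕ} (K : ℕ) (p : Fin m → ℤ) : Prop :=
  (∀ i, 0 ≤ p i ∧ p i ≤ (K : ℤ) * 3 ^ (i : ℕ)) ∧
  (∑ i, (p i : ℝ) / 3 ^ (i : ℕ)) = (K : ℝ)

/-- The pilot length `N_pil(p) = Σ_i p_i`. -/
def Npil {m : ℕ} (p : Fin m → ℤ) : ℤ := ∑ i, p i

/-- Auxiliary recursion: `t_0 = K - q 0`, `t_{i+1} = 3·t_i - q (i+1)`. -/
def transAuxK (K : ℕ) (q : ℕ → ℤ) : ℕ → ℤ
  | 0 => (K : ℤ) - q 0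
  | i + 1 => 3 * transAuxK K q i - q (i + 1)

/-- The transition vector of a pilot assignment vector for `K` users per cell:
`t_0 = K - p_0`, `t_i = 3·t_{i-1} - p_i`. -/
def transVecK {m : ℕ} (K : ℕ) (p : Fin m → ℤ) (i : ℕ) : ℤ :=
  transAuxK K (fun j => if h : j < m then p ⟨j, h⟩ else 0) i

/-- Closed form for the recursion. -/
lemma transAuxK_closed (K : ℕ) (q : ℕ → ℤ) (n : ℕ) :
    transAuxK K q n = 3 ^ n * K - ∑ j ∈ Finset.range (n + 1), q j * 3 ^ (n - j) := by
  induction n with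
  | zero => simp [transAuxK]
  | succ n ih =>
    rw [transAuxK, ih, Finset.sum_range_succ (f := fun j => q j * 3 ^ (n + 1 - j))]
    have hs : ∑ j ∈ Finset.range (n + 1), q j * 3 ^ (n + 1 - j)
        = 3 * ∑ j ∈ Finset.range (n + 1), q j * 3 ^ (n - j) := by
      rw [Finset.mul_sum]
      refine Finset.sum_congr rfl fun j hj => ?_
      have hj' : j ≤ n := Nat.lt_succ_iff.mp (Finset.mem_range.mp hj)
      have : n + 1 - j = (n - j) + 1 := by omega
      rw [this, pow_succ]
      ring
    rw [hs]
    simp [pow_succ, Nat.sub_self]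
    ring

/-- Generalized Lemma 2: for `p ∈ Ω(N_p0, K)` with `N_p0 ≡ K (mod 2)` and
`K ≤ N_p0 ≤ K·3^{m-1}`, the transition vector satisfies `0 ≤ t_i ≤ K·3^i` and
`Σ_{i=0}^{m-2} t_i = (N_p0 - K)/2`. -/
theorem transition_vector_constraints_multiuser (m : ℕ) (hm : 2 ≤ m)
    (K : ℕ) (hK : 1 ≤ K)
    (Np0 : ℤ) (hpar : Np0 ≡ (K : ℤ) [ZMOD 2])
    (h1 : (K : ℤ) ≤ Np0) (h2 : Np0 ≤ (K : ℤ) * 3 ^ (m - 1))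
    (p : Fin m → ℤ) (hp : validPK K p) (hlen : Npil p = Np0) :
    (∀ i ≤ m - 2, 0 ≤ transVecK K p i ∧ transVecK K p i ≤ (K : ℤ) * 3 ^ i) ∧
    ∑ i ∈ Finset.range (m - 1), transVecK K p i = (Np0 - K) / 2 := by
  set q : ℕ → ℤ := fun j => if h : j < m then p ⟨j, h⟩ else 0 with hq
  have hqnn : ∀ j, 0 ≤ q j := by
    intro j
    by_cases h : j < m
    · simp only [hq, dif_pos h]; exact (hp.1 _).1
    · simp [hq, dif_neg h]
  have hqub : ∀ j, q j ≤ (K : ℤ) * 3 ^ j := by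
    intro j
    by_cases h : j < m
    · simp only [hq, dif_pos h]; exact (hp.1 _).2
    · simp only [hq, dif_neg h]; positivity
  -- real identity turned into an integer identity
  have hreal : ∑ j ∈ Finset.range m, (q j : ℝ) / 3 ^ j = (K : ℝ) := by
    rw [← Fin.sum_univ_eq_sum_range (fun j => (q j : ℝ) / 3 ^ j) m]
    rw [← hp.2]
    refine Finset.sum_congr rfl fun i _ => ?_
    simp [hq, i.isLt]
  have hreal2 : ∑ j ∈ Finset.range m, (q j : ℝ) * 3 ^ (m - 1 - j) = (K : ℝ) * 3 ^ (m - 1) := by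
    rw [← hreal, Finset.sum_mul]
    refine Finset.sum_congr rfl fun j hj => ?_
    have hj' : j ≤ m - 1 := by have := Finset.mem_range.mp hj; omega
    have hpow : (3 : ℝ) ^ (m - 1) = 3 ^ j * 3 ^ (m - 1 - j) := by
      rw [← pow_add]; congr 1; omega
    rw [hpow]
    field_simp
  have hint : ∑ j ∈ Finset.range m, q j * 3 ^ (m - 1 - j) = (K : ℤ) * 3 ^ (m - 1) := by
    exact_mod_cast hreal2
  -- t_{m-1} = 0
  have htop : transAuxK K q (m - 1) = 0 := by
    have h := transAuxK_closed K q (m - 1)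
    have : m - 1 + 1 = m := by omega
    rw [this] at h
    rw [h, hint]
    ring
  -- nonnegativity by downward induction
  have hstep : ∀ n, 3 * transAuxK K q n = transAuxK K q (n + 1) + q (n + 1) := by
    intro n; rw [transAuxK]; ring
  have hnn : ∀ d, d ≤ m - 1 → 0 ≤ transAuxK K q (m - 1 - d) := by
    intro d
    induction d with
    | zero => intro _; simp [htop]
    | succ d ih =>
      intro hd
      have h1' : m - 1 - d = (m - 1 - (d + 1)) + 1 := by omega
      have h3 : 0 ≤ 3 * transAuxK K q (m - 1 - (d + 1)) := by
        rw [hstep, ← h1']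
        have := ih (by omega)
        have := hqnn (m - 1 - d)
        omega
      omega
  have hnn' : ∀ i ≤ m - 1, 0 ≤ transAuxK K q i := by
    intro i hi
    have := hnn (m - 1 - i) (by omega)
    rwa [show m - 1 - (m - 1 - i) = i by omega] at this
  -- upper bound by upward induction
  have hub : ∀ i, transAuxK K q i ≤ (K : ℤ) * 3 ^ i := by
    intro i
    induction i with
    | zero => simp [transAuxK]; have := hqnn 0; omega
    | succ i ih =>
      rw [transAuxK]
      have := hqnn (i + 1)
      have h3 : 3 * transAuxK K q i ≤ 3 * ((K : ℤ) * 3 ^ i) := by omega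
      calc 3 * transAuxK K q i - q (i + 1) ≤ 3 * ((K : ℤ) * 3 ^ i) := by omega
        _ = (K : ℤ) * 3 ^ (i + 1) := by rw [pow_succ]; ring
  -- the sum
  have hNpil : ∑ j ∈ Finset.range m, q j = Np0 := by
    rw [← hlen, Npil, ← Fin.sum_univ_eq_sum_range (fun j => q j) m]
    refine Finset.sum_congr rfl fun i _ => ?_
    simp [hq, i.isLt]
  have hsum : 2 * (∑ i ∈ Finset.range (m - 1), transAuxK K q i) = Np0 - K := by
    have hshift : ∑ i ∈ Finset.range (m - 1), transAuxK K q (i + 1)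
        = ∑ i ∈ Finset.range m, transAuxK K q i - transAuxK K q 0 := by
      have e := Finset.sum_range_succ' (fun i => transAuxK K q i) (m - 1)
      rw [show m - 1 + 1 = m by omega] at e
      linarith [e]
    have hqshift : ∑ i ∈ Finset.range (m - 1), q (i + 1)
        = ∑ i ∈ Finset.range m, q i - q 0 := by
      have e := Finset.sum_range_succ' (fun i => q i) (m - 1)
      rw [show m - 1 + 1 = m by omega] at e
      linarith [e]
    have hrec : ∑ i ∈ Finset.range (m - 1), transAuxK K q (i + 1)
        = 3 * (∑ i ∈ Finset.range (m - 1), transAuxK K q i)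
          - ∑ i ∈ Finset.range (m - 1), q (i + 1) := by
      rw [Finset.mul_sum, ← Finset.sum_sub_distrib]
      exact Finset.sum_congr rfl fun i _ => by rw [transAuxK]
    have htot : ∑ i ∈ Finset.range m, transAuxK K q i
        = (∑ i ∈ Finset.range (m - 1), transAuxK K q i) + transAuxK K q (m - 1) := by
      have e := Finset.sum_range_succ (fun i => transAuxK K q i) (m - 1)
      rw [show m - 1 + 1 = m by omega] at e
      exact e
    have ht0 : transAuxK K q 0 = (K : ℤ) - q 0 := rfl
    rw [hshift, htot, htop, hqshift, hNpil] at hrec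
    rw [ht0] at hrec
    linarith
  constructor
  · intro i hi
    exact ⟨hnn' i (by omega), hub i⟩
  · have : ∑ i ∈ Finset.range (m - 1), transVecK K p i
        = ∑ i ∈ Finset.range (m - 1), transAuxK K q i := rfl
    rw [this]
    omega
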